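/- Lions' lemma style lower bound: let A be a symmetric positive definite bilinear form on a finite-dimensional space V = V₁ + V₂ (sum of subspaces), and suppose the decomposition is stable: every w ∈ V admits w = w₁ + w₂ with wᵢ ∈ Vᵢ and A(w₁,w₁) + A(w₂,w₂) ≤ C·A(w,w). Then with P₁, P₂ the A-orthogonal projections onto V₁, V₂, one has A(w,w) ≤ C·(A(P₁w, w) + A(P₂w, w)) for all w ∈ V. -/
import Mathlib

/-- Nonnegativity of a positive definite form. -/
lemma bil_nonneg {V : Type*} [AddCommGroup V] [Module ℝ V]
    (A : V →ₗ[ℝ] V →ₗ[ℝ] ℝ) (hpos : ∀ u, u ≠ 0 → 0 < A u u) (x : V) :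
    0 ≤ A x x := by
  by_cases hx : x = 0
  · simp [hx]
  · exact (hpos x hx).le

/-- Cauchy–Schwarz for a symmetric positive definite bilinear form. -/
lemma bil_cauchy_schwarz {V : Type*} [AddCommGroup V] [Module ℝ V]
    (A : V →ₗ[ℝ] V →ₗ[ℝ] ℝ)
    (hsymm : ∀ u v, A u v = A v u)
    (hpos : ∀ u, u ≠ 0 → 0 < A u u) (x y : V) :
    (A x y) ^ 2 ≤ A x x * A y y := by
  by_cases hy : y = 0
  · simp [hy]
  · have hyy : 0 < A y y := hpos y hy
    set t : ℝ := -(A x y) / (A y y) with ht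
    have h := bil_nonneg A hpos (x + t • y)
    have hexp : A (x + t • y) (x + t • y)
        = A x x + 2 * t * A x y + t ^ 2 * A y y := by
      simp [map_add, map_smul, hsymm y x]
      ring
    rw [hexp] at h
    have hts : 2 * t * A x y + t ^ 2 * A y y = -((A x y) ^ 2 / A y y) := by
      rw [ht]; field_simp; ring
    have h' : (A x y) ^ 2 / A y y ≤ A x x := by linarith [h, hts]
    calc (A x y) ^ 2 = (A x y) ^ 2 / A y y * A y y := by field_simp
    _ ≤ A x x * A y y := by
        exact mul_le_mul_of_nonneg_right h' hyy.le

/-- Lions' lemma style lower bound: for a stable decomposition V = V₁ + V₂ with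
respect to an SPD bilinear form A and A-orthogonal projections Pᵢ onto Vᵢ,
A(w,w) ≤ C(A(P₁w,w) + A(P₂w,w)). -/
theorem lions_lemma_lower_bound
    {V : Type*} [AddCommGroup V] [Module ℝ V] [FiniteDimensional ℝ V]
    (A : V →ₗ[ℝ] V →ₗ[ℝ] ℝ)
    (hsymm : ∀ u v, A u v = A v u)
    (hpos : ∀ u, u ≠ 0 → 0 < A u u)
    (V₁ V₂ : Submodule ℝ V) (hsum : V₁ ⊔ V₂ = ⊤)
    (P₁ P₂ : V →ₗ[ℝ] V)
    (hP₁mem : ∀ w, P₁ w ∈ V₁) (hP₂mem : ∀ w, P₂ w ∈ V₂)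
    (hP₁ : ∀ w, ∀ v ∈ V₁, A (P₁ w) v = A w v)
    (hP₂ : ∀ w, ∀ v ∈ V₂, A (P₂ w) v = A w v)
    (C : ℝ) (hC : 0 < C)
    (hstable : ∀ w : V, ∃ w₁ ∈ V₁, ∃ w₂ ∈ V₂,
      w = w₁ + w₂ ∧ A w₁ w₁ + A w₂ w₂ ≤ C * A w w) :
    ∀ w : V, A w w ≤ C * (A (P₁ w) w + A (P₂ w) w) := by
  intro w
  obtain ⟨w₁, hw₁, w₂, hw₂, hdecomp, hbound⟩ := hstable w
  set a := A w w with ha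
  set s₁ := A (P₁ w) w₁ with hs₁
  set s₂ := A (P₂ w) w₂ with hs₂
  set p₁ := A (P₁ w) (P₁ w) with hp₁
  set p₂ := A (P₂ w) (P₂ w) with hp₂
  set b₁ := A w₁ w₁ with hb₁
  set b₂ := A w₂ w₂ with hb₂
  -- identify pᵢ with A (Pᵢ w) w
  have hp₁w : A (P₁ w) w = p₁ := by
    rw [hp₁, hP₁ w (P₁ w) (hP₁mem w), hsymm]
  have hp₂w : A (P₂ w) w = p₂ := by
    rw [hp₂, hP₂ w (P₂ w) (hP₂mem w), hsymm]
  -- a = s₁ + s₂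
  have hasum : a = s₁ + s₂ := by
    rw [ha, hs₁, hs₂, hP₁ w w₁ hw₁, hP₂ w w₂ hw₂]
    calc A w w = A w (w₁ + w₂) := by rw [← hdecomp]
    _ = A w w₁ + A w w₂ := by rw [map_add]
  have hcs₁ : s₁ ^ 2 ≤ p₁ * b₁ := bil_cauchy_schwarz A hsymm hpos _ _
  have hcs₂ : s₂ ^ 2 ≤ p₂ * b₂ := bil_cauchy_schwarz A hsymm hpos _ _
  have hp₁n : 0 ≤ p₁ := bil_nonneg A hpos _
  have hp₂n : 0 ≤ p₂ := bil_nonneg A hpos _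
  have hb₁n : 0 ≤ b₁ := bil_nonneg A hpos _
  have hb₂n : 0 ≤ b₂ := bil_nonneg A hpos _
  have han : 0 ≤ a := bil_nonneg A hpos _
  -- cross term: 2 s₁ s₂ ≤ p₁ b₂ + p₂ b₁
  have hprod : s₁ ^ 2 * s₂ ^ 2 ≤ (p₁ * b₁) * (p₂ * b₂) :=
    mul_le_mul hcs₁ hcs₂ (sq_nonneg _) (mul_nonneg hp₁n hb₁n)
  have hcross : 2 * s₁ * s₂ ≤ p₁ * b₂ + p₂ * b₁ := by
    nlinarith [hprod, sq_nonneg (p₁ * b₂ - p₂ * b₁), sq_nonneg (2 * s₁ * s₂),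
      mul_nonneg (mul_nonneg hp₁n hb₂n) (mul_nonneg hp₂n hb₁n),
      sq_nonneg (2 * s₁ * s₂ - (p₁ * b₂ + p₂ * b₁)),
      mul_nonneg hp₁n hb₂n, mul_nonneg hp₂n hb₁n]
  -- a² ≤ (p₁ + p₂)(b₁ + b₂) ≤ (p₁ + p₂) C a
  have hsq : a ^ 2 ≤ (p₁ + p₂) * (C * a) := by
    have h1 : a ^ 2 ≤ (p₁ + p₂) * (b₁ + b₂) := by
      rw [hasum]; nlinarith [hcs₁, hcs₂, hcross]
    calc a ^ 2 ≤ (p₁ + p₂) * (b₁ + b₂) := h1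
    _ ≤ (p₁ + p₂) * (C * a) := by
        apply mul_le_mul_of_nonneg_left hbound (by linarith)
  rw [hp₁w, hp₂w]
  rcases eq_or_lt_of_le han with h0 | h0
  · rw [← h0]
    positivity
  · have hmul : a * a ≤ (C * (p₁ + p₂)) * a := by
      calc a * a = a ^ 2 := by ring
      _ ≤ (p₁ + p₂) * (C * a) := hsq
      _ = (C * (p₁ + p₂)) * a := by ring
    exact le_of_mul_le_mul_right hmul h0
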